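/- With g = 1/(F₁⋯F_r) as above, suppose complex numbers c_{jl} (symmetric in j,l) satisfy ∑_{j,l} c_{jl} fⱼᵏ fₗᵏ' = 0 for all pairs k ≤ k' (i.e., the corresponding quadric vanishes on the symmetric products of the sections). Then the constant-coefficient second-order operator ∑_{j,l} c_{jl} ∂²/∂a_j∂a_l annihilates g. -/

import Mathlib

/-! Writing `g = h ∘ L` with `h y = (∏ₖ yₖ)⁻¹` and `L` the linear map whose `k`-th coordinate is
`Fₖ`, the chain rule gives `∂ⱼ∂ₗ g(a) = D²h(L a)(L eⱼ, L eₗ)`. Expanding `L eⱼ = ∑ₖ fᵏⱼ eₖ`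
bilinearly, `∑ c_{jl} ∂ⱼ∂ₗ g(a)` becomes a combination of the quadrics `∑ c_{jl} fᵏⱼ fᵏ'ₗ`,
which all vanish (for `k > k'` by the symmetry of `c`). -/

open Finset

/-- The partial derivative `∂h/∂a_j` of a function of `N` complex variables. -/
noncomputable def pderiv' {N : ℕ} (j : Fin N) (h : (Fin N → ℂ) → ℂ) :
    (Fin N → ℂ) → ℂ :=
  fun a => fderiv ℂ h a (Pi.single j 1)

theorem ContinuousLinearMap.sum_mul_apply_columns {𝕜 ι κ : Type*} [NormedField 𝕜]
    [Fintype ι] [Fintype κ] [DecidableEq κ]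
    (B : (κ → 𝕜) →L[𝕜] (κ → 𝕜) →L[𝕜] 𝕜) (c : ι → ι → 𝕜) (f : κ → ι → 𝕜) :
    ∑ j, ∑ l, c j l * B (fun k => f k j) (fun k => f k l)
      = ∑ k, ∑ k', B (Pi.single k 1) (Pi.single k' 1) * ∑ j, ∑ l, c j l * f k j * f k' l := by
  have hcol : ∀ j, (fun k => f k j) = ∑ k, f k j • (Pi.single k 1 : κ → 𝕜) := fun j => by
    ext k; simp [Pi.single_apply]
  simp only [hcol, map_sum, map_smul, _root_.sum_apply, _root_.smul_apply, smul_eq_mul, mul_sum]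
  simp_rw [sum_comm (γ := ι) (α := κ)]
  rw [sum_comm]
  refine sum_congr rfl fun k _ => sum_congr rfl fun k' _ => sum_congr rfl fun j _ =>
    sum_congr rfl fun l _ => by ring

theorem fderiv_fderiv_comp_continuousLinearMap_apply {𝕜 E G F : Type*}
    [NontriviallyNormedField 𝕜] [NormedAddCommGroup E] [NormedSpace 𝕜 E]
    [NormedAddCommGroup G] [NormedSpace 𝕜 G] [NormedAddCommGroup F] [NormedSpace 𝕜 F]
    {h : G → F} {L : E →L[𝕜] G} {a : E} (hh : ContDiffAt 𝕜 2 h (L a)) (v w : E) :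
    fderiv 𝕜 (fun x => fderiv 𝕜 (h ∘ L) x w) a v = fderiv 𝕜 (fderiv 𝕜 h) (L a) (L v) (L w) := by
  have hnear : (fun x => fderiv 𝕜 (h ∘ L) x w) =ᶠ[nhds a] fun x => fderiv 𝕜 h (L x) (L w) := by
    filter_upwards [L.continuous.continuousAt.eventually (hh.eventually (by simp))] with x hx
    rw [fderiv_comp x (hx.differentiableAt (by simp)) L.differentiableAt, L.fderiv]
    rfl
  have hD : DifferentiableAt 𝕜 (fderiv 𝕜 h) (L a) :=
    (hh.fderiv_right (m := 1) (by norm_num)).differentiableAt one_ne_zero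
  have hDL : HasFDerivAt (fun x => fderiv 𝕜 h (L x)) ((fderiv 𝕜 (fderiv 𝕜 h) (L a)).comp L) a :=
    hD.hasFDerivAt.comp a L.hasFDerivAt
  rw [hnear.fderiv_eq, (hDL.clm_apply (hasFDerivAt_const (L w) a)).fderiv]
  simp

/-- **Quadrics vanishing on the sections annihilate `g = 1/(F₁ ⋯ F_r)`.**
If the symmetric coefficients `c j l` satisfy `∑_{j,l} c j l * f_j^k * f_l^{k'} = 0`
for all `k ≤ k'`, then `∑_{j,l} c j l ∂²/∂a_j∂a_l` annihilates `g`. -/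
theorem quadric_annihilates_product_inverse (N r : ℕ)
    (f : Fin r → Fin N → ℂ)
    (F : Fin r → (Fin N → ℂ) → ℂ) (hF : ∀ k a, F k a = ∑ i, a i * f k i)
    (g : (Fin N → ℂ) → ℂ) (hg : ∀ a, g a = (∏ k, F k a)⁻¹)
    (c : Fin N → Fin N → ℂ) (hsymm : ∀ j l, c j l = c l j)
    (hker : ∀ k k' : Fin r, k ≤ k' → ∑ j, ∑ l, c j l * f k j * f k' l = 0)
    (a : Fin N → ℂ) (ha : ∀ k, F k a ≠ 0) :
    ∑ j, ∑ l, c j l * pderiv' j (pderiv' l g) a = 0 := by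
  let L : (Fin N → ℂ) →L[ℂ] (Fin r → ℂ) := LinearMap.toContinuousLinearMap (Matrix.of f).mulVecLin
  have hL : ∀ x k, L x k = F k x := fun x k => by
    simp [L, hF, Matrix.mulVec, dotProduct, mul_comm]
  have hcol : ∀ j, L (Pi.single j 1) = fun k => f k j := fun j => by
    ext k; simp [L]
  have hgL : g = (fun y : Fin r → ℂ => (∏ k, y k)⁻¹) ∘ L := funext fun x => by
    simp [hg, hL]
  have hsmooth : ContDiffAt ℂ 2 (fun y : Fin r → ℂ => (∏ k, y k)⁻¹) (L a) :=
    (contDiff_prod fun k _ => contDiff_apply ℂ ℂ k).contDiffAt.inv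
      (prod_ne_zero_iff.2 fun k _ => hL a k ▸ ha k)
  have hquadric : ∀ k k', ∑ j, ∑ l, c j l * f k j * f k' l = 0 := fun k k' => by
    rcases le_total k k' with hkk' | hk'k
    · exact hker k k' hkk'
    · rw [sum_comm, ← hker k' k hk'k]
      exact sum_congr rfl fun l _ => sum_congr rfl fun j _ => by rw [hsymm]; ring
  have hsecond : ∀ j l, pderiv' j (pderiv' l g) a
      = fderiv ℂ (fderiv ℂ fun y : Fin r → ℂ => (∏ k, y k)⁻¹) (L a)
          (fun k => f k j) (fun k => f k l) := fun j l => by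
    rw [← hcol, ← hcol, hgL]
    exact fderiv_fderiv_comp_continuousLinearMap_apply hsmooth _ _
  simp only [hsecond, ContinuousLinearMap.sum_mul_apply_columns, hquadric, mul_zero, sum_const_zero]
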